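/- arXiv:1208.4923 — 5 statements merged into one kernel-verified Lean document; each statement's English description precedes it below -/
import Mathlib

section
/- Let I ⊆ ℝ be an open interval, f : I → (0,∞) and h : I → ℝ smooth, n, m ∈ ℝ, and let η̂ : ℝ × I × (0,∞) → ℝ be smooth. Define ξ̂(t,x,v) = √(vⁿ/f(x)) for v > 0. Suppose u : Ω → (0,∞) is smooth on an open set Ω ⊆ ℝ × I and satisfies u_t(t,x) = η̂(t,x,u(t,x)) − ξ̂(t,x,u(t,x))·u_x(t,x) on Ω. Then for all (t,x) ∈ Ω, the quantity f(x)u_tt − ∂_x(uⁿu_x) − h(x)uᵐ equals f(x)[η̂_t − ξ̂_t u_x + (η̂_u − ξ̂_u u_x)(η̂ − ξ̂ u_x) − ξ̂(η̂_x + η̂_u u_x − ξ̂_x u_x − ξ̂_u u_x²)] − n u^{n−1}u_x² − h(x)uᵐ, an expression depending only on (t,x), u(t,x) and u_x(t,x); in particular the coefficient of u_xx vanishes identically because f(x)ξ̂² = uⁿ. -/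
/-!
Differentiating the invariant surface condition `u_t = η̂ - ξ̂ u_x` in `t` and in `x`, and using
`u_tx = u_xt`, expresses `u_tt` through first-order quantities and `ξ̂² u_xx`. Since
`(uⁿ u_x)_x = n u^(n-1) u_x² + uⁿ u_xx` and `f ξ̂² = uⁿ`, the `u_xx` terms of `L[u]` cancel.
-/

open Real Set

noncomputable section

/-- Partial derivative in the first (time) variable of a function of `(t, x)`. -/
def pt2 (u : ℝ → ℝ → ℝ) : ℝ → ℝ → ℝ := fun t x => deriv (fun s => u s x) t

/-- Partial derivative in the second (space) variable of a function of `(t, x)`. -/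
def px2 (u : ℝ → ℝ → ℝ) : ℝ → ℝ → ℝ := fun t x => deriv (fun y => u t y) x

/-- Partial derivative in the first variable `t` of a function of `(t, x, u)`. -/
def pt3 (F : ℝ → ℝ → ℝ → ℝ) : ℝ → ℝ → ℝ → ℝ := fun t x v => deriv (fun s => F s x v) t

/-- Partial derivative in the second variable `x` of a function of `(t, x, u)`. -/
def px3 (F : ℝ → ℝ → ℝ → ℝ) : ℝ → ℝ → ℝ → ℝ := fun t x v => deriv (fun y => F t y v) x

/-- Partial derivative in the third variable `u` of a function of `(t, x, u)`. -/
def pu3 (F : ℝ → ℝ → ℝ → ℝ) : ℝ → ℝ → ℝ → ℝ := fun t x v => deriv (fun w => F t x w) v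

open Filter Topology

section Slices

variable {E : Type*} [NormedAddCommGroup E] [NormedSpace ℝ E] {t x : ℝ}

lemma hasDerivAt_fst_slice {G : ℝ × ℝ → E} (hG : DifferentiableAt ℝ G (t, x)) :
    HasDerivAt (fun s => G (s, x)) (fderiv ℝ G (t, x) (1, 0)) t :=
  hG.hasFDerivAt.comp_hasDerivAt t ((hasDerivAt_id t).prodMk (hasDerivAt_const t x))

lemma hasDerivAt_snd_slice {G : ℝ × ℝ → E} (hG : DifferentiableAt ℝ G (t, x)) :
    HasDerivAt (fun y => G (t, y)) (fderiv ℝ G (t, x) (0, 1)) x :=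
  hG.hasFDerivAt.comp_hasDerivAt x ((hasDerivAt_const x t).prodMk (hasDerivAt_id x))

lemma eventually_fst_slice {P : ℝ × ℝ → Prop} (h : ∀ᶠ p in 𝓝 (t, x), P p) :
    ∀ᶠ s in 𝓝 t, P (s, x) :=
  ((continuous_id.prodMk continuous_const).tendsto t).eventually h

lemma eventually_snd_slice {P : ℝ × ℝ → Prop} (h : ∀ᶠ p in 𝓝 (t, x), P p) :
    ∀ᶠ y in 𝓝 x, P (t, y) :=
  ((continuous_const.prodMk continuous_id).tendsto x).eventually h

end Slices

section PartialDerivatives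

variable {u : ℝ → ℝ → ℝ} {t x : ℝ}

lemma hasDerivAt_pt2 (hu : DifferentiableAt ℝ (fun p : ℝ × ℝ => u p.1 p.2) (t, x)) :
    HasDerivAt (fun s => u s x) (pt2 u t x) t :=
  (hasDerivAt_fst_slice hu).differentiableAt.hasDerivAt

lemma hasDerivAt_px2 (hu : DifferentiableAt ℝ (fun p : ℝ × ℝ => u p.1 p.2) (t, x)) :
    HasDerivAt (fun y => u t y) (px2 u t x) x :=
  (hasDerivAt_snd_slice hu).differentiableAt.hasDerivAt

lemma ContDiffOn.uncurry_pt2 {Ω : Set (ℝ × ℝ)} {n N : WithTop ℕ∞} (hΩ : IsOpen Ω)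
    (hu : ContDiffOn ℝ N (fun p : ℝ × ℝ => u p.1 p.2) Ω) (hnN : n + 1 ≤ N) :
    ContDiffOn ℝ n (fun p : ℝ × ℝ => pt2 u p.1 p.2) Ω := by
  refine ((hu.fderiv_of_isOpen hΩ hnN).clm_apply (contDiffOn_const (c := ((1 : ℝ), (0 : ℝ))))).congr
    fun p hp => ?_
  have hd := (hu.contDiffAt (hΩ.mem_nhds hp)).differentiableAt
    (one_pos.trans_le (le_add_self.trans hnN)).ne'
  exact (hasDerivAt_fst_slice hd).deriv

lemma ContDiffOn.uncurry_px2 {Ω : Set (ℝ × ℝ)} {n N : WithTop ℕ∞} (hΩ : IsOpen Ω)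
    (hu : ContDiffOn ℝ N (fun p : ℝ × ℝ => u p.1 p.2) Ω) (hnN : n + 1 ≤ N) :
    ContDiffOn ℝ n (fun p : ℝ × ℝ => px2 u p.1 p.2) Ω := by
  refine ((hu.fderiv_of_isOpen hΩ hnN).clm_apply (contDiffOn_const (c := ((0 : ℝ), (1 : ℝ))))).congr
    fun p hp => ?_
  have hd := (hu.contDiffAt (hΩ.mem_nhds hp)).differentiableAt
    (one_pos.trans_le (le_add_self.trans hnN)).ne'
  exact (hasDerivAt_snd_slice hd).deriv

lemma pt2_px2_eq_px2_pt2 {n : WithTop ℕ∞} (hu : ContDiffAt ℝ n (fun p : ℝ × ℝ => u p.1 p.2) (t, x))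
    (hn : 2 ≤ n) : pt2 (px2 u) t x = px2 (pt2 u) t x := by
  set U : ℝ × ℝ → ℝ := fun p => u p.1 p.2
  have hu2 : ContDiffAt ℝ 2 U (t, x) := hu.of_le hn
  have hdiff : ∀ᶠ p in 𝓝 (t, x), DifferentiableAt ℝ U p :=
    (hu2.eventually (by simp)).mono fun p hp => hp.differentiableAt (by simp)
  have hD : DifferentiableAt ℝ (fderiv ℝ U) (t, x) :=
    (hu2.fderiv_right (m := 1) le_rfl).differentiableAt one_ne_zero
  set B := fderiv ℝ (fderiv ℝ U) (t, x)
  have hpt : pt2 (px2 u) t x = B (1, 0) (0, 1) := by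
    have h := (hasDerivAt_fst_slice hD).clm_apply (hasDerivAt_const t ((0 : ℝ), (1 : ℝ)))
    simp only [map_zero, add_zero] at h
    refine (h.congr_of_eventuallyEq ?_).deriv
    filter_upwards [eventually_fst_slice hdiff] with s hs using (hasDerivAt_snd_slice hs).deriv
  have hpx : px2 (pt2 u) t x = B (0, 1) (1, 0) := by
    have h := (hasDerivAt_snd_slice hD).clm_apply (hasDerivAt_const x ((1 : ℝ), (0 : ℝ)))
    simp only [map_zero, add_zero] at h
    refine (h.congr_of_eventuallyEq ?_).deriv
    filter_upwards [eventually_snd_slice hdiff] with y hy using (hasDerivAt_fst_slice hy).deriv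
  rw [hpt, hpx]
  exact hu2.isSymmSndFDerivAt (by simp) _ _

end PartialDerivatives

section ThreeVariables

variable {F : ℝ → ℝ → ℝ → ℝ}

lemma hasDerivAt_comp₃ {a b c : ℝ → ℝ} {a' b' c' s : ℝ}
    (hF : DifferentiableAt ℝ (fun p : ℝ × ℝ × ℝ => F p.1 p.2.1 p.2.2) (a s, b s, c s))
    (ha : HasDerivAt a a' s) (hb : HasDerivAt b b' s) (hc : HasDerivAt c c' s) :
    HasDerivAt (fun r => F (a r) (b r) (c r))
      (a' * pt3 F (a s) (b s) (c s) + b' * px3 F (a s) (b s) (c s)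
        + c' * pu3 F (a s) (b s) (c s)) s := by
  set L := fderiv ℝ (fun p : ℝ × ℝ × ℝ => F p.1 p.2.1 p.2.2) (a s, b s, c s)
  have hbasis : ∀ v : ℝ × ℝ × ℝ, L v = v.1 * L (1, 0, 0) + v.2.1 * L (0, 1, 0)
      + v.2.2 * L (0, 0, 1) := fun v => by
    rw [← smul_eq_mul, ← smul_eq_mul, ← smul_eq_mul, ← map_smul, ← map_smul, ← map_smul,
      ← map_add, ← map_add]
    simp
  have ht : pt3 F (a s) (b s) (c s) = L (1, 0, 0) :=
    (hF.hasFDerivAt.comp_hasDerivAt_of_eq (a s) ((hasDerivAt_id (a s)).prodMk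
      ((hasDerivAt_const (a s) (b s)).prodMk (hasDerivAt_const (a s) (c s)))) rfl).deriv
  have hx : px3 F (a s) (b s) (c s) = L (0, 1, 0) :=
    (hF.hasFDerivAt.comp_hasDerivAt_of_eq (b s) ((hasDerivAt_const (b s) (a s)).prodMk
      ((hasDerivAt_id (b s)).prodMk (hasDerivAt_const (b s) (c s)))) rfl).deriv
  have hu : pu3 F (a s) (b s) (c s) = L (0, 0, 1) :=
    (hF.hasFDerivAt.comp_hasDerivAt_of_eq (c s) ((hasDerivAt_const (c s) (a s)).prodMk
      ((hasDerivAt_const (c s) (b s)).prodMk (hasDerivAt_id (c s)))) rfl).deriv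
  rw [ht, hx, hu, ← hbasis (a', b', c')]
  exact hF.hasFDerivAt.comp_hasDerivAt s (ha.prodMk (hb.prodMk hc))

end ThreeVariables

section InvariantSurface

variable {u : ℝ → ℝ → ℝ} {Eta Xi : ℝ → ℝ → ℝ → ℝ} {t x : ℝ}

lemma pt2_pt2_of_invariant_surface
    (hchar : ∀ᶠ s in 𝓝 t, pt2 u s x = Eta s x (u s x) - Xi s x (u s x) * px2 u s x)
    (hEta : DifferentiableAt ℝ (fun p : ℝ × ℝ × ℝ => Eta p.1 p.2.1 p.2.2) (t, x, u t x))
    (hXi : DifferentiableAt ℝ (fun p : ℝ × ℝ × ℝ => Xi p.1 p.2.1 p.2.2) (t, x, u t x))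
    (hu : HasDerivAt (fun s => u s x) (pt2 u t x) t)
    (hux : HasDerivAt (fun s => px2 u s x) (pt2 (px2 u) t x) t) :
    pt2 (pt2 u) t x = pt3 Eta t x (u t x) + pu3 Eta t x (u t x) * pt2 u t x
      - ((pt3 Xi t x (u t x) + pu3 Xi t x (u t x) * pt2 u t x) * px2 u t x
        + Xi t x (u t x) * pt2 (px2 u) t x) := by
  have hE := hasDerivAt_comp₃ (a := fun r => r) (b := fun _ => x) hEta (hasDerivAt_id' t)
    (hasDerivAt_const t x) hu
  have hX := hasDerivAt_comp₃ (a := fun r => r) (b := fun _ => x) hXi (hasDerivAt_id' t)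
    (hasDerivAt_const t x) hu
  refine ((hE.sub (hX.mul hux)).congr_of_eventuallyEq hchar).deriv.trans ?_
  ring

lemma px2_pt2_of_invariant_surface
    (hchar : ∀ᶠ y in 𝓝 x, pt2 u t y = Eta t y (u t y) - Xi t y (u t y) * px2 u t y)
    (hEta : DifferentiableAt ℝ (fun p : ℝ × ℝ × ℝ => Eta p.1 p.2.1 p.2.2) (t, x, u t x))
    (hXi : DifferentiableAt ℝ (fun p : ℝ × ℝ × ℝ => Xi p.1 p.2.1 p.2.2) (t, x, u t x))
    (hu : HasDerivAt (fun y => u t y) (px2 u t x) x)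
    (hux : HasDerivAt (fun y => px2 u t y) (px2 (px2 u) t x) x) :
    px2 (pt2 u) t x = px3 Eta t x (u t x) + pu3 Eta t x (u t x) * px2 u t x
      - ((px3 Xi t x (u t x) + pu3 Xi t x (u t x) * px2 u t x) * px2 u t x
        + Xi t x (u t x) * px2 (px2 u) t x) := by
  have hE := hasDerivAt_comp₃ (a := fun _ => t) (b := fun r => r) hEta (hasDerivAt_const x t)
    (hasDerivAt_id' x) hu
  have hX := hasDerivAt_comp₃ (a := fun _ => t) (b := fun r => r) hXi (hasDerivAt_const x t)
    (hasDerivAt_id' x) hu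
  refine ((hE.sub (hX.mul hux)).congr_of_eventuallyEq hchar).deriv.trans ?_
  ring

end InvariantSurface

lemma contDiffOn_sqrt_rpow_div {I : Set ℝ} {f : ℝ → ℝ} {N : WithTop ℕ∞} (n : ℝ)
    (hf : ContDiffOn ℝ N f I) (hfpos : ∀ x ∈ I, 0 < f x) :
    ContDiffOn ℝ N (fun p : ℝ × ℝ × ℝ => √(p.2.2 ^ n / f p.2.1)) (univ ×ˢ I ×ˢ Ioi 0) := by
  have hv : ContDiffOn ℝ N (fun p : ℝ × ℝ × ℝ => p.2.2 ^ n) (univ ×ˢ I ×ˢ Ioi 0) :=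
    (contDiff_snd.comp contDiff_snd).contDiffOn.rpow_const_of_ne fun p hp =>
      (hp.2.2 : 0 < p.2.2).ne'
  have hfx : ContDiffOn ℝ N (fun p : ℝ × ℝ × ℝ => f p.2.1) (univ ×ˢ I ×ˢ Ioi 0) :=
    hf.comp (contDiff_fst.comp contDiff_snd).contDiffOn fun p hp => hp.2.1
  exact (hv.div hfx fun p hp => (hfpos _ hp.2.1).ne').sqrt fun p hp =>
    (div_pos (rpow_pos_of_pos hp.2.2 n) (hfpos _ hp.2.1)).ne'

theorem singular_vector_field_general
    (I : Set ℝ) (hI : IsOpen I)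
    (f h : ℝ → ℝ) (hf : ContDiffOn ℝ (⊤ : ℕ∞) f I)
    (hfpos : ∀ x ∈ I, 0 < f x)
    (n m : ℝ)
    (Eta : ℝ → ℝ → ℝ → ℝ)
    (hEta : ContDiffOn ℝ (⊤ : ℕ∞) (fun p : ℝ × ℝ × ℝ => Eta p.1 p.2.1 p.2.2)
      (univ ×ˢ I ×ˢ Ioi (0 : ℝ)))
    (Xi : ℝ → ℝ → ℝ → ℝ)
    (hXidef : ∀ (t : ℝ), ∀ x ∈ I, ∀ v : ℝ, 0 < v → Xi t x v = Real.sqrt (v ^ n / f x))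
    (Ω : Set (ℝ × ℝ)) (hΩ : IsOpen Ω) (hΩI : ∀ p ∈ Ω, p.2 ∈ I)
    (u : ℝ → ℝ → ℝ) (hu : ContDiffOn ℝ (⊤ : ℕ∞) (fun p : ℝ × ℝ => u p.1 p.2) Ω)
    (hupos : ∀ p ∈ Ω, 0 < u p.1 p.2)
    (hchar : ∀ t x : ℝ, (t, x) ∈ Ω →
      pt2 u t x = Eta t x (u t x) - Xi t x (u t x) * px2 u t x) :
    ∀ t x : ℝ, (t, x) ∈ Ω →
      (f x * pt2 (pt2 u) t x
          - deriv (fun y => (u t y) ^ n * px2 u t y) x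
          - h x * (u t x) ^ m
        =
        f x * (pt3 Eta t x (u t x) - pt3 Xi t x (u t x) * px2 u t x
              + (pu3 Eta t x (u t x) - pu3 Xi t x (u t x) * px2 u t x)
                * (Eta t x (u t x) - Xi t x (u t x) * px2 u t x)
              - Xi t x (u t x) *
                  (px3 Eta t x (u t x) + pu3 Eta t x (u t x) * px2 u t x
                    - px3 Xi t x (u t x) * px2 u t x
                    - pu3 Xi t x (u t x) * (px2 u t x) ^ 2))
          - n * (u t x) ^ (n - 1) * (px2 u t x) ^ 2
          - h x * (u t x) ^ m)
      ∧ f x * (Xi t x (u t x)) ^ 2 = (u t x) ^ n := by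
  intro t x hmem
  have hxI := hΩI _ hmem
  have hu0 : 0 < u t x := hupos _ hmem
  have hΩnhds := hΩ.mem_nhds hmem
  have hU := hu.contDiffAt hΩnhds
  have hUd := hU.differentiableAt (by simp)
  have hUxd : DifferentiableAt ℝ (fun p : ℝ × ℝ => px2 u p.1 p.2) (t, x) :=
    ((hu.uncurry_px2 (n := (⊤ : ℕ∞)) hΩ (by simp)).contDiffAt hΩnhds).differentiableAt (by simp)
  have hS : univ ×ˢ I ×ˢ Ioi (0 : ℝ) ∈ 𝓝 (t, x, u t x) :=
    (isOpen_univ.prod (hI.prod isOpen_Ioi)).mem_nhds ⟨mem_univ t, hxI, hu0⟩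
  have hEd := (hEta.contDiffAt hS).differentiableAt (by simp)
  have hXd : DifferentiableAt ℝ (fun p : ℝ × ℝ × ℝ => Xi p.1 p.2.1 p.2.2) (t, x, u t x) :=
    (((contDiffOn_sqrt_rpow_div n hf hfpos).congr fun p hp =>
      hXidef p.1 p.2.1 hp.2.1 p.2.2 hp.2.2).contDiffAt hS).differentiableAt (by simp)
  have hfXi : f x * Xi t x (u t x) ^ 2 = u t x ^ n := by
    rw [hXidef t x hxI _ hu0, sq_sqrt (by have := hfpos x hxI; positivity),
      mul_div_cancel₀ _ (hfpos x hxI).ne']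
  have hutt := pt2_pt2_of_invariant_surface
    ((eventually_fst_slice hΩnhds).mono fun s hs => hchar s x hs) hEd hXd
    (hasDerivAt_pt2 hUd) (hasDerivAt_pt2 hUxd)
  have hutx := px2_pt2_of_invariant_surface
    ((eventually_snd_slice hΩnhds).mono fun y hy => hchar t y hy) hEd hXd
    (hasDerivAt_px2 hUd) (hasDerivAt_px2 hUxd)
  have hflux : deriv (fun y => u t y ^ n * px2 u t y) x
      = px2 u t x * n * u t x ^ (n - 1) * px2 u t x + u t x ^ n * px2 (px2 u) t x :=
    (((hasDerivAt_px2 hUd).rpow_const (Or.inl hu0.ne')).mul (hasDerivAt_px2 hUxd)).deriv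
  refine ⟨?_, hfXi⟩
  rw [hutt, hflux, pt2_px2_eq_px2_pt2 hU (WithTop.coe_le_coe.mpr le_top), hutx]
  linear_combination (f x * (pu3 Eta t x (u t x) - pu3 Xi t x (u t x) * px2 u t x))
    * hchar t x hmem + px2 (px2 u) t x * hfXi

/-- For `ξ̂ = √(uⁿ/f)` the vector field `∂_t + ξ̂∂_x + η̂∂_u` is singular:
on solutions of the invariant surface condition the second-order terms of
`L[u] = f(x)u_tt − (uⁿu_x)_x − h(x)uᵐ` disappear, since `f ξ̂² = uⁿ`. -/
theorem singular_vector_field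
    (I : Set ℝ) (hI : IsOpen I) (hIc : I.OrdConnected)
    (f h : ℝ → ℝ) (hf : ContDiffOn ℝ (⊤ : ℕ∞) f I) (hh : ContDiffOn ℝ (⊤ : ℕ∞) h I)
    (hfpos : ∀ x ∈ I, 0 < f x)
    (n m : ℝ)
    (Eta : ℝ → ℝ → ℝ → ℝ)
    (hEta : ContDiffOn ℝ (⊤ : ℕ∞) (fun p : ℝ × ℝ × ℝ => Eta p.1 p.2.1 p.2.2)
      (univ ×ˢ I ×ˢ Ioi (0 : ℝ)))
    (Xi : ℝ → ℝ → ℝ → ℝ)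
    (hXidef : ∀ (t : ℝ), ∀ x ∈ I, ∀ v : ℝ, 0 < v → Xi t x v = Real.sqrt (v ^ n / f x))
    (Ω : Set (ℝ × ℝ)) (hΩ : IsOpen Ω) (hΩI : ∀ p ∈ Ω, p.2 ∈ I)
    (u : ℝ → ℝ → ℝ) (hu : ContDiffOn ℝ (⊤ : ℕ∞) (fun p : ℝ × ℝ => u p.1 p.2) Ω)
    (hupos : ∀ p ∈ Ω, 0 < u p.1 p.2)
    (hchar : ∀ t x : ℝ, (t, x) ∈ Ω →
      pt2 u t x = Eta t x (u t x) - Xi t x (u t x) * px2 u t x) :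
    ∀ t x : ℝ, (t, x) ∈ Ω →
      (f x * pt2 (pt2 u) t x
          - deriv (fun y => (u t y) ^ n * px2 u t y) x
          - h x * (u t x) ^ m
        =
        f x * (pt3 Eta t x (u t x) - pt3 Xi t x (u t x) * px2 u t x
              + (pu3 Eta t x (u t x) - pu3 Xi t x (u t x) * px2 u t x)
                * (Eta t x (u t x) - Xi t x (u t x) * px2 u t x)
              - Xi t x (u t x) *
                  (px3 Eta t x (u t x) + pu3 Eta t x (u t x) * px2 u t x
                    - px3 Xi t x (u t x) * px2 u t x
                    - pu3 Xi t x (u t x) * (px2 u t x) ^ 2))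
          - n * (u t x) ^ (n - 1) * (px2 u t x) ^ 2
          - h x * (u t x) ^ m)
      ∧ f x * (Xi t x (u t x)) ^ 2 = (u t x) ^ n :=
  singular_vector_field_general I hI f h hf hfpos n m Eta hEta Xi hXidef Ω hΩ hΩI u hu hupos hchar

end
end

section
/- Let n, m, a, b, r, s ∈ ℝ with n ≠ 0. Set ξ(x) = a(n+1)x² + (2b(n+1) − r)x + s and let I ⊆ ℝ be an open interval on which ξ(x) ≠ 0. Let f, h : I → (0,∞) be smooth functions satisfying f'(x)/f(x) = (2r − (3n+4)(ax+b))/ξ(x) and h'(x)/h(x) = (2r − (m+3n+3)(ax+b))/ξ(x) on I, and set η(t,x,u) = (ax+b)u. Then ξ and η satisfy the determining system (E1)–(E5) identically for all t ∈ ℝ, x ∈ I and u > 0. -/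
open Real Set

noncomputable section

/-- The determining system (E1)–(E5) for regular reduction operators
`Q = ∂_t + ξ∂_x + η∂_u` of the equation `f(x)u_tt = (uⁿu_x)_x + h(x)uᵐ`, required to hold
identically for `t ∈ ℝ`, `x ∈ I` and `u > 0`. -/
def DeterminingSystem (n m : ℝ) (f h : ℝ → ℝ) (I : Set ℝ) (Xi Eta : ℝ → ℝ → ℝ → ℝ) : Prop :=
  ∀ t : ℝ, ∀ x ∈ I, ∀ u : ℝ, 0 < u →
    -- (E1)  ξ_u = 0
    pu3 Xi t x u = 0
    -- (E2)  2fξ_t − nηu^{n−1} + (2ξ_x + ξ f_x/f)uⁿ = 0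
    ∧ 2 * f x * pt3 Xi t x u - n * Eta t x u * u ^ (n - 1)
        + (2 * px3 Xi t x u + Xi t x u * deriv f x / f x) * u ^ n = 0
    -- (E3)  (2nξ_x − nη_u + nξ f_x/f)u^{n−1} + (n−n²)ηu^{n−2} − η_{uu}uⁿ + fξ²η_{uu} = 0
    ∧ (2 * n * px3 Xi t x u - n * pu3 Eta t x u + n * Xi t x u * deriv f x / f x) * u ^ (n - 1)
        + (n - n ^ 2) * Eta t x u * u ^ (n - 2)
        - pu3 (pu3 Eta) t x u * u ^ n
        + f x * (Xi t x u) ^ 2 * pu3 (pu3 Eta) t x u = 0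
    -- (E4)  2fξ_tξ_x − 2fξ_tη_u − 2nη_xu^{n−1} − fξ_{tt} − 2fξηη_{uu} − 2fξη_{tu}
    --        + (ξ_{xx} − 2η_{xu})uⁿ = 0
    ∧ 2 * f x * pt3 Xi t x u * px3 Xi t x u - 2 * f x * pt3 Xi t x u * pu3 Eta t x u
        - 2 * n * px3 Eta t x u * u ^ (n - 1)
        - f x * pt3 (pt3 Xi) t x u
        - 2 * f x * Xi t x u * Eta t x u * pu3 (pu3 Eta) t x u
        - 2 * f x * Xi t x u * pt3 (pu3 Eta) t x u
        + (px3 (px3 Xi) t x u - 2 * px3 (pu3 Eta) t x u) * u ^ n = 0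
    -- (E5)  (ξh f_x/f − ξh_x + hη_u)uᵐ + fη²η_{uu} + 2fηη_{tu} − 2fξ_tη_x − η_{xx}uⁿ
    --        + fη_{tt} − mhηu^{m−1} = 0
    ∧ (Xi t x u * h x * deriv f x / f x - Xi t x u * deriv h x + h x * pu3 Eta t x u) * u ^ m
        + f x * (Eta t x u) ^ 2 * pu3 (pu3 Eta) t x u
        + 2 * f x * Eta t x u * pt3 (pu3 Eta) t x u
        - 2 * f x * pt3 Xi t x u * px3 Eta t x u
        - px3 (px3 Eta) t x u * u ^ n
        + f x * pt3 (pt3 Eta) t x u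
        - m * h x * Eta t x u * u ^ (m - 1) = 0


section PartialDerivatives

variable (G : ℝ → ℝ → ℝ) (g p : ℝ → ℝ)

@[simp]
lemma pt3_of_time_independent : pt3 (fun _ x u => G x u) = fun _ _ _ => 0 := by
  funext t x u
  exact deriv_const t (G x u)

@[simp]
lemma pu3_of_fun_x : pu3 (fun _ x _ => g x) = fun _ _ _ => 0 := by
  funext t x u
  exact deriv_const u (g x)

@[simp]
lemma px3_of_fun_x : px3 (fun _ x _ => g x) = fun _ x _ => deriv g x := rfl

@[simp]
lemma pu3_mul_u : pu3 (fun _ x u => p x * u) = fun _ x _ => p x := by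
  funext t x u
  simp [pu3]

@[simp]
lemma px3_mul_u : px3 (fun _ x u => p x * u) = fun _ x u => deriv p x * u := by
  funext t x u
  exact deriv_mul_const_field u

end PartialDerivatives

lemma deriv_affine (α β : ℝ) : deriv (fun x : ℝ => α * x + β) = fun _ => α := by
  funext x
  simp

lemma deriv_quadratic (α β γ : ℝ) :
    deriv (fun x : ℝ => α * x ^ 2 + β * x + γ) = fun x => 2 * α * x + β := by
  funext x
  have := (((hasDerivAt_pow 2 x).const_mul α).add ((hasDerivAt_id x).const_mul β)).add_const γ
  refine this.deriv.trans ?_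
  push_cast
  ring

/- For an operator whose coefficients do not depend on `t` and with `η` linear in `u`, every
equation of the system carries a single power of `u`, so the system reduces to ODEs in `x`
((E3) is then `n` times (E2)). -/
theorem determiningSystem_of_stationary_linear {n m : ℝ} {f h ξ p : ℝ → ℝ} {I : Set ℝ}
    (hh : ∀ x ∈ I, h x ≠ 0)
    (hf : ∀ x ∈ I, 2 * deriv ξ x + ξ x * deriv f x / f x = n * p x)
    (hξ : ∀ x ∈ I, deriv (deriv ξ) x = 2 * (n + 1) * deriv p x)
    (hp : ∀ x ∈ I, deriv (deriv p) x = 0)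
    (hfh : ∀ x ∈ I, ξ x * (deriv f x / f x - deriv h x / h x) = (m - 1) * p x) :
    DeterminingSystem n m f h I (fun _ x _ => ξ x) (fun _ x u => p x * u) := by
  intro t x hx u hu
  have pow_n : u ^ (n - 1) * u = u ^ n := by
    rw [← Real.rpow_add_one hu.ne']
    ring_nf
  have pow_n_sub_one : u ^ (n - 2) * u = u ^ (n - 1) := by
    rw [← Real.rpow_add_one hu.ne']
    ring_nf
  have pow_m : u ^ (m - 1) * u = u ^ m := by
    rw [← Real.rpow_add_one hu.ne']
    ring_nf
  have h_deriv : deriv h x = deriv h x / h x * h x := (div_mul_cancel₀ _ (hh x hx)).symm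
  simp only [pt3_of_time_independent, pu3_of_fun_x, px3_of_fun_x, pu3_mul_u, px3_mul_u]
  refine ⟨trivial, ?_, ?_, ?_, ?_⟩
  · linear_combination u ^ n * hf x hx - n * p x * pow_n
  · linear_combination n * u ^ (n - 1) * hf x hx + (n - n ^ 2) * p x * pow_n_sub_one
  · linear_combination u ^ n * hξ x hx - 2 * n * deriv p x * pow_n
  · linear_combination h x * u ^ m * hfh x hx - u * u ^ n * hp x hx - m * h x * p x * pow_m
      - ξ x * u ^ m * h_deriv

theorem case_1_1_verification_general
    (n m a b r s : ℝ)
    (ξ : ℝ → ℝ)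
    (hξdef : ∀ x : ℝ, ξ x = a * (n + 1) * x ^ 2 + (2 * b * (n + 1) - r) * x + s)
    (I : Set ℝ)
    (hξne : ∀ x ∈ I, ξ x ≠ 0)
    (f h : ℝ → ℝ)
    (hhpos : ∀ x ∈ I, 0 < h x)
    (hfeq : ∀ x ∈ I, deriv f x / f x = (2 * r - (3 * n + 4) * (a * x + b)) / ξ x)
    (hheq : ∀ x ∈ I, deriv h x / h x = (2 * r - (m + 3 * n + 3) * (a * x + b)) / ξ x) :
    DeterminingSystem n m f h I (fun _ x _ => ξ x) (fun _ x u => (a * x + b) * u) := by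
  have hξ : ξ = fun x => a * (n + 1) * x ^ 2 + (2 * b * (n + 1) - r) * x + s := funext hξdef
  have hξ' : deriv ξ = fun x => 2 * (a * (n + 1)) * x + (2 * b * (n + 1) - r) := by
    rw [hξ, deriv_quadratic]
  refine determiningSystem_of_stationary_linear (p := fun x => a * x + b)
    (fun x hx => (hhpos x hx).ne') (fun x hx => ?_) (fun x _ => ?_) (fun x _ => ?_)
    (fun x hx => ?_)
  · rw [hξ', mul_div_assoc, hfeq x hx, mul_div_cancel₀ _ (hξne x hx)]
    ring
  · rw [hξ', deriv_affine, deriv_affine]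
    ring
  · rw [deriv_affine, deriv_const]
  · rw [hfeq x hx, hheq x hx, ← sub_div, mul_div_cancel₀ _ (hξne x hx)]
    ring

/-- Case 1.1. With `ξ = a(n+1)x² + (2b(n+1)−r)x + s`, `η = (ax+b)u` and
`f, h` satisfying the indicated logarithmic-derivative equations, the determining system
(E1)–(E5) holds identically. -/
theorem case_1_1_verification
    (n m a b r s : ℝ) (hn : n ≠ 0)
    (ξ : ℝ → ℝ)
    (hξdef : ∀ x : ℝ, ξ x = a * (n + 1) * x ^ 2 + (2 * b * (n + 1) - r) * x + s)
    (I : Set ℝ) (hI : IsOpen I) (hIc : I.OrdConnected)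
    (hξne : ∀ x ∈ I, ξ x ≠ 0)
    (f h : ℝ → ℝ)
    (hf : ContDiffOn ℝ (⊤ : ℕ∞) f I) (hh : ContDiffOn ℝ (⊤ : ℕ∞) h I)
    (hfpos : ∀ x ∈ I, 0 < f x) (hhpos : ∀ x ∈ I, 0 < h x)
    (hfeq : ∀ x ∈ I, deriv f x / f x = (2 * r - (3 * n + 4) * (a * x + b)) / ξ x)
    (hheq : ∀ x ∈ I, deriv h x / h x = (2 * r - (m + 3 * n + 3) * (a * x + b)) / ξ x) :
    DeterminingSystem n m f h I (fun _ x _ => ξ x) (fun _ x u => (a * x + b) * u) :=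
  case_1_1_verification_general n m a b r s ξ hξdef I hξne f h hhpos hfeq hheq

end
end

section
/- Let I ⊆ ℝ be an open interval, ξ : I → (0,∞) smooth, Ξ : I → ℝ with Ξ'(x) = 1/ξ(x), and c₁, c₂ ∈ ℝ. Let Ω = {(t,x) ∈ ℝ × I : 1 + 2(c₁(t − Ξ(x)) + c₂) > 0}. For either choice of sign, define u(t,x) = (1 ± √(1 + 2(c₁(t − Ξ(x)) + c₂)))·ξ(x)^{1/4} on Ω. Then u satisfies ξ(x)^{−7/4}·u_tt − ∂_x(u·u_x) − ((ξ'(x)² − 2ξ(x)ξ''(x))/(8ξ(x)²))·u² = 0 at every point of Ω. -/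
/-!
For `u = φ(t - Ξ(x)) ξ(x)^{1/4}` with `Ξ' = 1/ξ`, all terms carrying derivatives of `ξ` cancel
(those with `φ²` against the potential term), and the equation becomes
`ξ^{-3/2} (φ'' - (φ φ')') = 0`. For `φ = 1 ± √(1 + 2(c₁ω + c₂))` one has `(φ - 1) φ' = c₁`;
differentiating this first integral gives the reduced ODE `φ'' = (φ φ')'`.
-/

open Real Set Topology Filter

noncomputable section

theorem ContDiffOn.hasDerivAt_deriv {f : ℝ → ℝ} {s : Set ℝ} {x : ℝ}
    (hf : ContDiffOn ℝ 1 f s) (hs : IsOpen s) (hx : x ∈ s) : HasDerivAt f (deriv f x) x :=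
  ((hf.differentiableOn one_ne_zero).differentiableAt (hs.mem_nhds hx)).hasDerivAt

theorem ContDiffOn.hasDerivAt_deriv_deriv {f : ℝ → ℝ} {s : Set ℝ} {x : ℝ}
    (hf : ContDiffOn ℝ 2 f s) (hs : IsOpen s) (hx : x ∈ s) :
    HasDerivAt (deriv f) (deriv (deriv f) x) x :=
  (hf.deriv_of_isOpen hs (by norm_num)).hasDerivAt_deriv hs hx

theorem pt2_pt2_eq {u : ℝ → ℝ → ℝ} {φ φ' : ℝ → ℝ} {t x c k φ'' : ℝ}
    (hu : ∀ s, u s x = φ (s - c) * k)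
    (hφ : ∀ᶠ ω in 𝓝 (t - c), HasDerivAt φ (φ' ω) ω) (hφ' : HasDerivAt φ' φ'' (t - c)) :
    pt2 (pt2 u) t x = φ'' * k := by
  have hut : (fun s => pt2 u s x) =ᶠ[𝓝 t] fun s => φ' (s - c) * k := by
    filter_upwards [((continuous_sub_right c).tendsto t).eventually hφ] with s hs
    simp only [pt2, hu]
    exact ((hs.comp_sub_const s c).mul_const k).deriv
  change deriv (fun s => pt2 u s x) t = _
  rw [hut.deriv_eq]
  exact ((hφ'.comp_sub_const t c).mul_const k).deriv

theorem HasDerivAt.comp_const_sub_of_hasDerivAt {φ Ξ : ℝ → ℝ} {t y φ' Ξ' : ℝ}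
    (hφ : HasDerivAt φ φ' (t - Ξ y)) (hΞ : HasDerivAt Ξ Ξ' y) :
    HasDerivAt (fun z => φ (t - Ξ z)) (-(φ' * Ξ')) y :=
  (hφ.comp y (hΞ.const_sub t)).congr_deriv (by ring)

theorem px2_eq {u : ℝ → ℝ → ℝ} {ξ Ξ φ : ℝ → ℝ} {t y ξ' φ' : ℝ}
    (hu : (fun z => u t z) =ᶠ[𝓝 y] fun z => φ (t - Ξ z) * ξ z ^ ((1 : ℝ) / 4))
    (hξy : 0 < ξ y) (hξ : HasDerivAt ξ ξ' y) (hΞ : HasDerivAt Ξ (1 / ξ y) y)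
    (hφ : HasDerivAt φ φ' (t - Ξ y)) :
    px2 u t y = ξ y ^ (-(3 : ℝ) / 4) * (φ (t - Ξ y) * ξ' / 4 - φ') := by
  have hP : HasDerivAt (fun z => ξ z ^ ((1 : ℝ) / 4))
      (ξ' * (1 / 4) * ξ y ^ (-(3 : ℝ) / 4)) y := by
    convert hξ.rpow_const (p := 1 / 4) (Or.inl hξy.ne') using 3
    norm_num
  have hq : ξ y ^ ((1 : ℝ) / 4) = ξ y ^ (-(3 : ℝ) / 4) * ξ y := by
    rw [← rpow_add_one hξy.ne']
    norm_num
  rw [px2, hu.deriv_eq, ((hφ.comp_const_sub_of_hasDerivAt hΞ).fun_mul hP).deriv, hq]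
  field_simp
  ring

theorem mul_px2_eq {u : ℝ → ℝ → ℝ} {ξ Ξ φ : ℝ → ℝ} {t y ξ' φ' : ℝ}
    (hu : (fun z => u t z) =ᶠ[𝓝 y] fun z => φ (t - Ξ z) * ξ z ^ ((1 : ℝ) / 4))
    (hξy : 0 < ξ y) (hξ : HasDerivAt ξ ξ' y) (hΞ : HasDerivAt Ξ (1 / ξ y) y)
    (hφ : HasDerivAt φ φ' (t - Ξ y)) :
    u t y * px2 u t y = ξ y ^ (-(1 : ℝ) / 2) * (φ (t - Ξ y) * (φ (t - Ξ y) * ξ' / 4 - φ')) := by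
  rw [px2_eq hu hξy hξ hΞ hφ, show u t y = _ from hu.self_of_nhds,
    show -(1 : ℝ) / 2 = 1 / 4 + -3 / 4 by norm_num, rpow_add hξy]
  ring

theorem hasDerivAt_flux {ξ Ξ φ φ' : ℝ → ℝ} {t x ξ'' φ'' : ℝ}
    (hξx : 0 < ξ x) (hξ : HasDerivAt ξ (deriv ξ x) x) (hdξ : HasDerivAt (deriv ξ) ξ'' x)
    (hΞ : HasDerivAt Ξ (1 / ξ x) x) (hφ : HasDerivAt φ (φ' (t - Ξ x)) (t - Ξ x))
    (hφ' : HasDerivAt φ' φ'' (t - Ξ x)) :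
    HasDerivAt
      (fun y => ξ y ^ (-(1 : ℝ) / 2) * (φ (t - Ξ y) * (φ (t - Ξ y) * deriv ξ y / 4 - φ' (t - Ξ y))))
      (ξ x ^ (-(3 : ℝ) / 2) * (φ' (t - Ξ x) ^ 2 + φ (t - Ξ x) * φ''
        + φ (t - Ξ x) ^ 2 * (2 * ξ x * ξ'' - deriv ξ x ^ 2) / 8)) x := by
  have hR : HasDerivAt (fun y => ξ y ^ (-(1 : ℝ) / 2))
      (deriv ξ x * (-1 / 2) * ξ x ^ (-(3 : ℝ) / 2)) x := by
    convert hξ.rpow_const (p := -1 / 2) (Or.inl hξx.ne') using 3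
    norm_num
  have hq : ξ x ^ (-(1 : ℝ) / 2) = ξ x ^ (-(3 : ℝ) / 2) * ξ x := by
    rw [← rpow_add_one hξx.ne']
    norm_num
  have hφω := hφ.comp_const_sub_of_hasDerivAt hΞ
  have hG := hφω.fun_mul
    (((hφω.fun_mul hdξ).div_const 4).fun_sub (hφ'.comp_const_sub_of_hasDerivAt hΞ))
  refine (hR.fun_mul hG).congr_deriv ?_
  rw [hq]
  field_simp
  ring

def waveOperator (ξ : ℝ → ℝ) (u : ℝ → ℝ → ℝ) (t x : ℝ) : ℝ :=
  ξ x ^ (-(7 : ℝ) / 4) * pt2 (pt2 u) t x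
    - deriv (fun y => u t y * px2 u t y) x
    - (((deriv ξ x) ^ 2 - 2 * ξ x * deriv (deriv ξ) x) / (8 * (ξ x) ^ 2)) * (u t x) ^ 2

theorem waveOperator_eq_of_travelling {I : Set ℝ} {ξ Ξ φ φ' : ℝ → ℝ} {u : ℝ → ℝ → ℝ}
    {t x φ'' : ℝ} (hI : IsOpen I) (hx : x ∈ I) (hξpos : ∀ y ∈ I, 0 < ξ y)
    (hξ : ∀ y ∈ I, HasDerivAt ξ (deriv ξ y) y) (hdξ : HasDerivAt (deriv ξ) (deriv (deriv ξ) x) x)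
    (hΞ : ∀ y ∈ I, HasDerivAt Ξ (1 / ξ y) y)
    (hu : ∀ s, ∀ y ∈ I, u s y = φ (s - Ξ y) * ξ y ^ ((1 : ℝ) / 4))
    (hφ : ∀ᶠ ω in 𝓝 (t - Ξ x), HasDerivAt φ (φ' ω) ω) (hφ' : HasDerivAt φ' φ'' (t - Ξ x)) :
    waveOperator ξ u t x
      = ξ x ^ (-(3 : ℝ) / 2) * (φ'' - φ' (t - Ξ x) ^ 2 - φ (t - Ξ x) * φ'') := by
  have hu_nhds : ∀ y ∈ I,
      (fun z => u t z) =ᶠ[𝓝 y] fun z => φ (t - Ξ z) * ξ z ^ ((1 : ℝ) / 4) := fun y hy =>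
    (hI.eventually_mem hy).mono fun z hz => hu t z hz
  have hnear : ∀ᶠ y in 𝓝 x, y ∈ I ∧ HasDerivAt φ (φ' (t - Ξ y)) (t - Ξ y) :=
    (hI.eventually_mem hx).and (((hΞ x hx).continuousAt.const_sub t).eventually hφ)
  have hflux : (fun y => u t y * px2 u t y) =ᶠ[𝓝 x] fun y =>
      ξ y ^ (-(1 : ℝ) / 2) * (φ (t - Ξ y) * (φ (t - Ξ y) * deriv ξ y / 4 - φ' (t - Ξ y))) :=
    hnear.mono fun y ⟨hy, hφy⟩ => mul_px2_eq (hu_nhds y hy) (hξpos y hy) (hξ y hy) (hΞ y hy) hφy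
  have hξx := hξpos x hx
  have h_time : ξ x ^ (-(7 : ℝ) / 4) * ξ x ^ ((1 : ℝ) / 4) = ξ x ^ (-(3 : ℝ) / 2) := by
    rw [← rpow_add hξx]
    norm_num
  have h_sq : (ξ x ^ ((1 : ℝ) / 4)) ^ 2 = ξ x ^ (-(3 : ℝ) / 2) * ξ x ^ 2 := by
    rw [← rpow_natCast, ← rpow_natCast, ← rpow_mul hξx.le, ← rpow_add hξx]
    norm_num
  rw [waveOperator, pt2_pt2_eq (hu · x hx) hφ hφ', hflux.deriv_eq,
    (hasDerivAt_flux hξx (hξ x hx) hdξ (hΞ x hx) hφ.self_of_nhds hφ').deriv, hu t x hx,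
    mul_pow, h_sq, mul_left_comm, h_time]
  field_simp
  ring

theorem sub_sq_sub_mul_eq_zero_of_first_integral {φ φ' : ℝ → ℝ} {ω₀ φ'' c : ℝ}
    (hφ : ∀ᶠ ω in 𝓝 ω₀, HasDerivAt φ (φ' ω) ω) (hφ' : HasDerivAt φ' φ'' ω₀)
    (hc : ∀ᶠ ω in 𝓝 ω₀, (φ ω - 1) * φ' ω = c) :
    φ'' - φ' ω₀ ^ 2 - φ ω₀ * φ'' = 0 := by
  have hprod : HasDerivAt (fun ω => (φ ω - 1) * φ' ω)
      (φ' ω₀ * φ' ω₀ + (φ ω₀ - 1) * φ'') ω₀ :=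
    (hφ.self_of_nhds.sub_const 1).mul hφ'
  have hconst : HasDerivAt (fun ω => (φ ω - 1) * φ' ω) 0 ω₀ :=
    (hasDerivAt_const ω₀ c).congr_of_eventuallyEq hc
  linear_combination -(hprod.unique hconst)

section sqrtProfile

variable {ε c₁ c₂ ω : ℝ}

def sqrtProfile (ε c₁ c₂ ω : ℝ) : ℝ := 1 + ε * √(1 + 2 * (c₁ * ω + c₂))

def sqrtProfileDeriv (ε c₁ c₂ ω : ℝ) : ℝ := ε * c₁ / √(1 + 2 * (c₁ * ω + c₂))

theorem hasDerivAt_sqrtProfile (hω : 0 < 1 + 2 * (c₁ * ω + c₂)) :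
    HasDerivAt (sqrtProfile ε c₁ c₂) (sqrtProfileDeriv ε c₁ c₂ ω) ω := by
  have hA : HasDerivAt (fun ω => 1 + 2 * (c₁ * ω + c₂)) (2 * c₁) ω := by
    simpa using ((((hasDerivAt_id ω).const_mul c₁).add_const c₂).const_mul 2).const_add 1
  refine (((hA.sqrt hω.ne').const_mul ε).const_add 1).congr_deriv ?_
  have hS := (Real.sqrt_pos.2 hω).ne'
  rw [sqrtProfileDeriv]
  field_simp

theorem differentiableAt_sqrtProfileDeriv (hω : 0 < 1 + 2 * (c₁ * ω + c₂)) :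
    DifferentiableAt ℝ (sqrtProfileDeriv ε c₁ c₂) ω := by
  unfold sqrtProfileDeriv
  have hA := hω.ne'
  have hS := (Real.sqrt_pos.2 hω).ne'
  fun_prop (disch := assumption)

theorem sqrtProfile_first_integral (hε : ε ^ 2 = 1)
    (hω : 0 < 1 + 2 * (c₁ * ω + c₂)) :
    (sqrtProfile ε c₁ c₂ ω - 1) * sqrtProfileDeriv ε c₁ c₂ ω = c₁ := by
  have hS := (Real.sqrt_pos.2 hω).ne'
  simp only [sqrtProfile, sqrtProfileDeriv, add_sub_cancel_left]
  field_simp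
  linear_combination c₁ * hε

end sqrtProfile

theorem exact_solution_r_zero_general
    (I : Set ℝ) (hI : IsOpen I)
    (ξ : ℝ → ℝ) (hξ : ContDiffOn ℝ (⊤ : ℕ∞) ξ I) (hξpos : ∀ x ∈ I, 0 < ξ x)
    (Ξ : ℝ → ℝ) (hΞ : ∀ x ∈ I, HasDerivAt Ξ (1 / ξ x) x)
    (c₁ c₂ : ℝ) (ε : ℝ) (hε : ε = 1 ∨ ε = -1)
    (u : ℝ → ℝ → ℝ)
    (hudef : ∀ t : ℝ, ∀ x ∈ I,
      u t x = (1 + ε * Real.sqrt (1 + 2 * (c₁ * (t - Ξ x) + c₂))) * ξ x ^ ((1 : ℝ) / 4)) :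
    ∀ t : ℝ, ∀ x ∈ I, 0 < 1 + 2 * (c₁ * (t - Ξ x) + c₂) →
      ξ x ^ (-(7 : ℝ) / 4) * pt2 (pt2 u) t x
        - deriv (fun y => u t y * px2 u t y) x
        - (((deriv ξ x) ^ 2 - 2 * ξ x * deriv (deriv ξ) x) / (8 * (ξ x) ^ 2)) * (u t x) ^ 2
        = 0 := by
  have hξ2 : ContDiffOn ℝ 2 ξ I := hξ.of_le (WithTop.coe_le_coe.2 le_top)
  intro t x hx hA
  have hdomain : ∀ᶠ ω in 𝓝 (t - Ξ x), 0 < 1 + 2 * (c₁ * ω + c₂) :=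
    ((by fun_prop : Continuous fun ω => 1 + 2 * (c₁ * ω + c₂)).tendsto _).eventually
      (lt_mem_nhds hA)
  have hε2 : ε ^ 2 = 1 := by rcases hε with rfl | rfl <;> norm_num
  have hφ : ∀ᶠ ω in 𝓝 (t - Ξ x),
      HasDerivAt (sqrtProfile ε c₁ c₂) (sqrtProfileDeriv ε c₁ c₂ ω) ω :=
    hdomain.mono fun ω hω => hasDerivAt_sqrtProfile hω
  have hφ' := (differentiableAt_sqrtProfileDeriv (ε := ε) hA).hasDerivAt
  have hode := sub_sq_sub_mul_eq_zero_of_first_integral hφ hφ'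
    (hdomain.mono fun ω hω => sqrtProfile_first_integral hε2 hω)
  have h := waveOperator_eq_of_travelling hI hx hξpos
    (fun y hy => (hξ2.of_le one_le_two).hasDerivAt_deriv hI hy) (hξ2.hasDerivAt_deriv_deriv hI hx)
    hΞ hudef hφ hφ'
  rwa [hode, mul_zero] at h

/-- The explicit function
`u(t,x) = (1 ± √(1 + 2(c₁(t − Ξ(x)) + c₂)))·ξ(x)^{1/4}` solves
`ξ^{−7/4}u_tt − (uu_x)_x − ((ξ'² − 2ξξ'')/(8ξ²))u² = 0` wherever
`1 + 2(c₁(t − Ξ(x)) + c₂) > 0`. -/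
theorem exact_solution_r_zero
    (I : Set ℝ) (hI : IsOpen I) (hIc : I.OrdConnected)
    (ξ : ℝ → ℝ) (hξ : ContDiffOn ℝ (⊤ : ℕ∞) ξ I) (hξpos : ∀ x ∈ I, 0 < ξ x)
    (Ξ : ℝ → ℝ) (hΞ : ∀ x ∈ I, HasDerivAt Ξ (1 / ξ x) x)
    (c₁ c₂ : ℝ) (ε : ℝ) (hε : ε = 1 ∨ ε = -1)
    (u : ℝ → ℝ → ℝ)
    (hudef : ∀ t : ℝ, ∀ x ∈ I,
      u t x = (1 + ε * Real.sqrt (1 + 2 * (c₁ * (t - Ξ x) + c₂))) * ξ x ^ ((1 : ℝ) / 4)) :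
    ∀ t : ℝ, ∀ x ∈ I, 0 < 1 + 2 * (c₁ * (t - Ξ x) + c₂) →
      ξ x ^ (-(7 : ℝ) / 4) * pt2 (pt2 u) t x
        - deriv (fun y => u t y * px2 u t y) x
        - (((deriv ξ x) ^ 2 - 2 * ξ x * deriv (deriv ξ) x) / (8 * (ξ x) ^ 2)) * (u t x) ^ 2
        = 0 :=
  exact_solution_r_zero_general I hI ξ hξ hξpos Ξ hΞ c₁ c₂ ε hε u hudef

end
end

section
/- Let n, m ∈ ℝ with n ≠ 0 and n ≠ −1, and let ε₁, ε₂, ε₃, ε₄, ε₅, ε₆, ε₇ ∈ ℝ with ε₁ ≠ 0, ε₇ > 0 and ε₃ε₆ − ε₄ε₅ = 1. Let I ⊆ ℝ be an open interval on which ε₅x + ε₆ ≠ 0, let X(x) = (ε₃x + ε₄)/(ε₅x + ε₆) (so X'(x) = 1/(ε₅x + ε₆)² > 0 and X is a diffeomorphism of I onto X(I)), let f : I → (0,∞) and h : I → ℝ be smooth, and let u : ℝ × I → (0,∞) be a smooth solution of f(x)u_tt = ∂_x(uⁿu_x) + h(x)uᵐ. Define ũ on ℝ × X(I) by ũ(ε₁t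 + ε₂, X(x)) = ε₇·X'(x)^{1/(2n+2)}·u(t,x), and define f̃, h̃ on X(I) by f̃(X(x)) = ε₁²·ε₇ⁿ·X'(x)^{−(3n+4)/(2n+2)}·f(x) and h̃(X(x)) = ε₇^{n+1−m}·X'(x)^{−(m+3n+3)/(2n+2)}·h(x). Then ũ satisfies f̃(x̃)·ũ_t̃t̃ = ∂_x̃(ũⁿũ_x̃) + h̃(x̃)·ũᵐ on ℝ × X(I). -/
/-!
Derivatives in `x̃` pull back along the Möbius map `X` (whose inverse is again Möbius) as
`∂_x̃ = p² ∂_x` with `p = ε₅x + ε₆`, and `X' = p⁻²`. With `ũ = ε₇ X'^{1/(2n+2)} u`, the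
exponent `1/(2n+2)` is exactly what turns the flux into
`ũⁿ ũ_x̃ = ε₇^{n+1} X'^{1/2} (p² uⁿu_x − ε₅ p u^{n+1}/(n+1))`.
Differentiating, the terms in `ε₅` cancel (since `(u^{n+1})_x = (n+1) uⁿu_x`), leaving
`(ũⁿũ_x̃)_x̃ = ε₇^{n+1} X'^{-3/2} (uⁿu_x)_x`. The time rescaling and the definitions of `f̃`, `h̃`
produce the same factor `ε₇^{n+1} X'^{-3/2}` in the other two terms, so the transformed
equation is that factor times the original one.
-/

open Real Set

noncomputable section

open Filter Topology

def mobius (A B C D x : ℝ) : ℝ := (A * x + B) / (C * x + D)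

section Mobius

variable {A B C D : ℝ}

theorem hasDerivAt_mobius (hdet : A * D - B * C = 1) {x : ℝ} (hx : C * x + D ≠ 0) :
    HasDerivAt (mobius A B C D) (1 / (C * x + D) ^ 2) x := by
  have h := (((hasDerivAt_id x).const_mul A).add_const B).div
    (((hasDerivAt_id x).const_mul C).add_const D) hx
  refine h.congr_deriv ?_
  simp only [id, mul_one]
  field_simp
  linear_combination hdet

theorem neg_mul_mobius_add (hdet : A * D - B * C = 1) {x : ℝ} (hx : C * x + D ≠ 0) :
    -C * mobius A B C D x + A = 1 / (C * x + D) := by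
  rw [mobius]
  field_simp
  linear_combination hdet

theorem mobius_inv_mobius (hdet : A * D - B * C = 1) {x : ℝ} (hx : C * x + D ≠ 0) :
    mobius D (-B) (-C) A (mobius A B C D x) = x := by
  rw [mobius, neg_mul_mobius_add hdet hx, div_eq_iff (one_div_ne_zero hx), mobius,
    mul_div_assoc', div_add' _ _ _ hx, mul_one_div, div_left_inj' hx]
  linear_combination x * hdet

theorem HasDerivAt.of_comp_mobius {v G : ℝ → ℝ} {s : Set ℝ} {x G' : ℝ}
    (hdet : A * D - B * C = 1) (hx : C * x + D ≠ 0) (hs : s ∈ 𝓝 x)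
    (hv : ∀ y ∈ s, v (mobius A B C D y) = G y) (hG : HasDerivAt G G' x) :
    HasDerivAt v (G' * (C * x + D) ^ 2) (mobius A B C D x) := by
  have hdet' : D * A - -B * -C = 1 := by linear_combination hdet
  have hX : -C * mobius A B C D x + A ≠ 0 := by
    rw [neg_mul_mobius_add hdet hx]; exact one_div_ne_zero hx
  have hYX := mobius_inv_mobius hdet hx
  have hY : HasDerivAt (mobius D (-B) (-C) A) ((C * x + D) ^ 2) (mobius A B C D x) := by
    have h := hasDerivAt_mobius hdet' hX
    rwa [neg_mul_mobius_add hdet hx, div_pow, one_pow, one_div_one_div] at h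
  have hden : ∀ᶠ y in 𝓝 (mobius A B C D x), -C * y + A ≠ 0 :=
    (continuous_const.mul continuous_id |>.add continuous_const).continuousAt.eventually_ne hX
  have hYs : ∀ᶠ y in 𝓝 (mobius A B C D x), mobius D (-B) (-C) A y ∈ s :=
    hY.continuousAt.preimage_mem_nhds (by rw [hYX]; exact hs)
  rw [← hYX] at hG
  refine (hG.comp _ hY).congr_of_eventuallyEq ?_
  filter_upwards [hden, hYs] with y hy hys
  have hXY := mobius_inv_mobius hdet' hy
  rw [neg_neg, neg_neg] at hXY
  simp only [Function.comp, ← hv _ hys, hXY]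

end Mobius

theorem deriv_comp_affine_eq {v w : ℝ → ℝ} {a b c : ℝ} (ha : a ≠ 0)
    (h : ∀ t, v (a * t + b) = c * w t) (t : ℝ) :
    deriv v (a * t + b) = c / a * deriv w t := by
  have hv : v = fun s => c * w (a⁻¹ * (s - b)) := by
    ext s; rw [← h]; congr 1; field_simp; ring
  subst hv
  rw [deriv_const_mul_field']
  beta_reduce
  rw [deriv_comp_sub_const (f := fun r => w (a⁻¹ * r)),
    deriv_comp_mul_left, smul_eq_mul, add_sub_cancel_right, inv_mul_cancel_left₀ ha]
  ring

theorem pt2_pt2_comp_affine {v u : ℝ → ℝ → ℝ} {a b c x y : ℝ} (ha : a ≠ 0)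
    (h : ∀ t, v (a * t + b) y = c * u t x) (t : ℝ) :
    pt2 (pt2 v) (a * t + b) y = c / a ^ 2 * pt2 (pt2 u) t x := by
  have hfirst := deriv_comp_affine_eq (v := fun s => v s y) (w := fun s => u s x) ha h
  rw [pow_two, ← div_div]
  exact deriv_comp_affine_eq ha hfirst t

theorem ContDiffOn.apply_of_uncurry {u : ℝ → ℝ → ℝ} {I : Set ℝ} {k : WithTop ℕ∞}
    (hu : ContDiffOn ℝ k (fun p : ℝ × ℝ => u p.1 p.2) (univ ×ˢ I)) (t : ℝ) :
    ContDiffOn ℝ k (u t) I :=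
  hu.comp (contDiff_const.prodMk contDiff_id).contDiffOn fun _ hy => ⟨mem_univ t, hy⟩

theorem hasDerivAt_one_div_sq_rpow {C D x : ℝ} (b : ℝ) (hx : C * x + D ≠ 0) :
    HasDerivAt (fun y => (1 / (C * y + D) ^ 2) ^ b)
      (-2 * b * C / (C * x + D) * (1 / (C * x + D) ^ 2) ^ b) x := by
  have hS : HasDerivAt (fun y => 1 / (C * y + D) ^ 2) (-2 * C / (C * x + D) ^ 3) x := by
    have h := (hasDerivAt_const x (1 : ℝ)).div
      ((((hasDerivAt_id x).const_mul C).add_const D).pow 2) (pow_ne_zero 2 hx)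
    refine h.congr_deriv ?_
    simp only [id, mul_one, Pi.pow_apply]
    field_simp
    ring
  refine (hS.rpow_const (Or.inl (by positivity))).congr_deriv ?_
  rw [rpow_sub_one (by positivity)]
  field_simp

theorem flux_pullback_eq {ε S U V p C n : ℝ} (hε : 0 < ε) (hS : 0 < S) (hU : 0 < U)
    (hn : n + 1 ≠ 0) (hp : p ≠ 0) :
    (ε * S ^ (1 / (2 * n + 2)) * U) ^ n
        * (ε * S ^ (1 / (2 * n + 2)) * (V - 2 * (1 / (2 * n + 2)) * C * U / p) * p ^ 2)
      = ε ^ (n + 1) * S ^ (1 / 2 : ℝ)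
          * (p ^ 2 * (U ^ n * V) - C * p * U ^ (n + 1) / (n + 1)) := by
  have hS' : S ^ (1 / 2 : ℝ) = (S ^ (1 / (2 * n + 2))) ^ n * S ^ (1 / (2 * n + 2)) := by
    rw [← rpow_mul hS.le, ← rpow_add hS]
    congr 1
    field_simp
  rw [mul_rpow (by positivity) hU.le, mul_rpow hε.le (by positivity), rpow_add_one hε.ne',
    rpow_add_one hU.ne', hS']
  field_simp

theorem hasDerivAt_flux_pullback {U : ℝ → ℝ} {n C D x Φ' : ℝ} (hn : n + 1 ≠ 0)
    (hx : C * x + D ≠ 0) (hU : 0 < U x) (hUd : DifferentiableAt ℝ U x)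
    (hΦ : HasDerivAt (fun y => U y ^ n * deriv U y) Φ' x) :
    HasDerivAt (fun y => (1 / (C * y + D) ^ 2) ^ (1 / 2 : ℝ)
        * ((C * y + D) ^ 2 * (U y ^ n * deriv U y) - C * (C * y + D) * U y ^ (n + 1) / (n + 1)))
      ((1 / (C * x + D) ^ 2) ^ (1 / 2 : ℝ) * (C * x + D) ^ 2 * Φ') x := by
  have hp : HasDerivAt (fun y => C * y + D) C x := by
    simpa using ((hasDerivAt_id x).const_mul C).add_const D
  have hpow : HasDerivAt (fun y => U y ^ (n + 1)) ((n + 1) * U x ^ n * deriv U x) x := by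
    have h := hUd.hasDerivAt.rpow_const (p := n + 1) (Or.inl hU.ne')
    rw [add_sub_cancel_right] at h
    exact h.congr_deriv (by ring)
  have h := (hasDerivAt_one_div_sq_rpow (1 / 2) hx).mul
    (((hp.pow 2).mul hΦ).sub (((hp.const_mul C).mul hpow).div_const (n + 1)))
  refine h.congr_deriv ?_
  simp only [Pi.mul_apply, Pi.sub_apply, Pi.pow_apply, Nat.cast_ofNat]
  field_simp
  ring

theorem deriv_flux_comp_mobius {A B C D n ε : ℝ} {I : Set ℝ} {U v : ℝ → ℝ}
    (hdet : A * D - B * C = 1) (hn : n + 1 ≠ 0) (hε : 0 < ε) (hI : IsOpen I)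
    (hden : ∀ x ∈ I, C * x + D ≠ 0) (hU : ContDiffOn ℝ 2 U I) (hUpos : ∀ x ∈ I, 0 < U x)
    (hv : ∀ x ∈ I, v (mobius A B C D x) = ε * (1 / (C * x + D) ^ 2) ^ (1 / (2 * n + 2)) * U x)
    {x : ℝ} (hx : x ∈ I) :
    deriv (fun y => v y ^ n * deriv v y) (mobius A B C D x)
      = ε ^ (n + 1) * (1 / (C * x + D) ^ 2) ^ (-3 / 2 : ℝ)
          * deriv (fun y => U y ^ n * deriv U y) x := by
  have hUd : ∀ y ∈ I, DifferentiableAt ℝ U y := fun y hy =>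
    (hU.differentiableOn (by norm_num)).differentiableAt (hI.mem_nhds hy)
  have hU'd : DifferentiableAt ℝ (deriv U) x :=
    ((hU.deriv_of_isOpen hI (m := 1) (by norm_num)).differentiableOn one_ne_zero).differentiableAt
      (hI.mem_nhds hx)
  have hG : ∀ y ∈ I, HasDerivAt (fun z => ε * (1 / (C * z + D) ^ 2) ^ (1 / (2 * n + 2)) * U z)
      (ε * (1 / (C * y + D) ^ 2) ^ (1 / (2 * n + 2))
        * (deriv U y - 2 * (1 / (2 * n + 2)) * C * U y / (C * y + D))) y := fun y hy =>
    (((hasDerivAt_one_div_sq_rpow _ (hden y hy)).const_mul ε).mul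
      (hUd y hy).hasDerivAt).congr_deriv (by field_simp; ring)
  have hflux : ∀ y ∈ I, v (mobius A B C D y) ^ n * deriv v (mobius A B C D y)
      = ε ^ (n + 1) * ((1 / (C * y + D) ^ 2) ^ (1 / 2 : ℝ)
          * ((C * y + D) ^ 2 * (U y ^ n * deriv U y)
            - C * (C * y + D) * U y ^ (n + 1) / (n + 1))) := fun y hy => by
    rw [(HasDerivAt.of_comp_mobius hdet (hden y hy) (hI.mem_nhds hy) hv (hG y hy)).deriv, hv y hy,
      flux_pullback_eq hε (by have := hden y hy; positivity) (hUpos y hy) hn (hden y hy)]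
    ring
  have hΦ : DifferentiableAt ℝ (fun y => U y ^ n * deriv U y) x :=
    ((hUd x hx).rpow_const (p := n) (Or.inl (hUpos x hx).ne')).mul hU'd
  rw [(HasDerivAt.of_comp_mobius hdet (hden x hx) (hI.mem_nhds hx) hflux
    ((hasDerivAt_flux_pullback hn (hden x hx) (hUpos x hx) (hUd x hx) hΦ.hasDerivAt).const_mul
      _)).deriv]
  have hS : (0 : ℝ) < 1 / (C * x + D) ^ 2 := by have := hden x hx; positivity
  have hS' : (1 / (C * x + D) ^ 2) ^ (-3 / 2 : ℝ)
      = (1 / (C * x + D) ^ 2) ^ (1 / 2 : ℝ) * (C * x + D) ^ 2 * (C * x + D) ^ 2 := by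
    rw [show (-3 / 2 : ℝ) = 1 / 2 - 2 by norm_num, rpow_sub hS, rpow_two]
    field_simp
  rw [hS']
  ring

theorem ftld_coeff_eq {a ε S n : ℝ} (ha : a ≠ 0) (hε : 0 < ε) (hS : 0 < S)
    (hn : n + 1 ≠ 0) :
    a ^ 2 * ε ^ n * S ^ (-(3 * n + 4) / (2 * n + 2)) * (ε * S ^ ((1 : ℝ) / (2 * n + 2)) / a ^ 2)
      = ε ^ (n + 1) * S ^ (-3 / 2 : ℝ) := by
  have hS' : S ^ (-3 / 2 : ℝ)
      = S ^ (-(3 * n + 4) / (2 * n + 2)) * S ^ ((1 : ℝ) / (2 * n + 2)) := by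
    rw [← rpow_add hS]
    congr 1
    field_simp
    ring
  rw [rpow_add_one hε.ne', hS']
  field_simp

theorem htld_coeff_eq {ε S U n m : ℝ} (hε : 0 < ε) (hS : 0 < S) (hU : 0 ≤ U)
    (hn : n + 1 ≠ 0) :
    ε ^ (n + 1 - m) * S ^ (-(m + 3 * n + 3) / (2 * n + 2))
        * (ε * S ^ ((1 : ℝ) / (2 * n + 2)) * U) ^ m
      = ε ^ (n + 1) * S ^ (-3 / 2 : ℝ) * U ^ m := by
  have hS' : S ^ (-3 / 2 : ℝ)
      = S ^ (-(m + 3 * n + 3) / (2 * n + 2)) * S ^ (1 / (2 * n + 2) * m) := by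
    rw [← rpow_add hS]
    congr 1
    field_simp
    ring
  rw [mul_rpow (by positivity) hU, mul_rpow hε.le (by positivity), ← rpow_mul hS.le, hS',
    rpow_sub hε]
  field_simp

theorem equivalence_group_n_ne_neg_one_general
    (n m : ℝ) (hn1 : n ≠ -1)
    (ε₁ ε₂ ε₃ ε₄ ε₅ ε₆ ε₇ : ℝ) (hε₁ : ε₁ ≠ 0) (hε₇ : 0 < ε₇)
    (hdet : ε₃ * ε₆ - ε₄ * ε₅ = 1)
    (I : Set ℝ) (hI : IsOpen I)
    (hden : ∀ x ∈ I, ε₅ * x + ε₆ ≠ 0)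
    (X : ℝ → ℝ) (hXdef : ∀ x : ℝ, X x = (ε₃ * x + ε₄) / (ε₅ * x + ε₆))
    (f h : ℝ → ℝ)
    (u : ℝ → ℝ → ℝ)
    (hu : ContDiffOn ℝ (⊤ : ℕ∞) (fun p : ℝ × ℝ => u p.1 p.2) (univ ×ˢ I))
    (hupos : ∀ t : ℝ, ∀ x ∈ I, 0 < u t x)
    (hsol : ∀ t : ℝ, ∀ x ∈ I,
      f x * pt2 (pt2 u) t x
        = deriv (fun y => (u t y) ^ n * px2 u t y) x + h x * (u t x) ^ m)
    (utld : ℝ → ℝ → ℝ) (ftld htld : ℝ → ℝ)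
    (hutlddef : ∀ t : ℝ, ∀ x ∈ I,
      utld (ε₁ * t + ε₂) (X x)
        = ε₇ * (1 / (ε₅ * x + ε₆) ^ 2) ^ ((1 : ℝ) / (2 * n + 2)) * u t x)
    (hftlddef : ∀ x ∈ I,
      ftld (X x) = ε₁ ^ 2 * ε₇ ^ n
        * (1 / (ε₅ * x + ε₆) ^ 2) ^ (-(3 * n + 4) / (2 * n + 2)) * f x)
    (hhtlddef : ∀ x ∈ I,
      htld (X x) = ε₇ ^ (n + 1 - m)
        * (1 / (ε₅ * x + ε₆) ^ 2) ^ (-(m + 3 * n + 3) / (2 * n + 2)) * h x) :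
    (∀ x ∈ I, HasDerivAt X (1 / (ε₅ * x + ε₆) ^ 2) x ∧ 0 < 1 / (ε₅ * x + ε₆) ^ 2)
    ∧ ∀ ttld : ℝ, ∀ xtld ∈ X '' I,
        ftld xtld * pt2 (pt2 utld) ttld xtld
          = deriv (fun y => (utld ttld y) ^ n * px2 utld ttld y) xtld + htld xtld * (utld ttld xtld) ^ m := by
  obtain rfl : X = mobius ε₃ ε₄ ε₅ ε₆ := funext hXdef
  have hn : n + 1 ≠ 0 := fun hn => hn1 (by linarith)
  have hS : ∀ x ∈ I, 0 < 1 / (ε₅ * x + ε₆) ^ 2 := fun x hx => by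
    have := hden x hx; positivity
  refine ⟨fun x hx => ⟨hasDerivAt_mobius hdet (hden x hx), hS x hx⟩, ?_⟩
  rintro T _ ⟨x, hx, rfl⟩
  obtain ⟨t, rfl⟩ : ∃ t, ε₁ * t + ε₂ = T := ⟨(T - ε₂) / ε₁, by field_simp; ring⟩
  have htime := pt2_pt2_comp_affine hε₁ (fun s => hutlddef s x hx) t
  have hspace := deriv_flux_comp_mobius hdet hn hε₇ hI hden
    ((hu.apply_of_uncurry t).of_le (WithTop.coe_le_coe.2 le_top)) (hupos t) (hutlddef t) hx
  simp only [px2] at hsol ⊢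
  rw [hftlddef x hx, hhtlddef x hx, htime, hspace, hutlddef t x hx]
  linear_combination (f x * pt2 (pt2 u) t x) * ftld_coeff_eq hε₁ hε₇ (hS x hx) hn
    - h x * htld_coeff_eq hε₇ (hS x hx) (hupos t x hx).le hn
    + ε₇ ^ (n + 1) * (1 / (ε₅ * x + ε₆) ^ 2) ^ (-3 / 2 : ℝ) * hsol t x hx

/-- equivalence group `G₁∼`, case `n ≠ −1`. The point transformation
`ttld = ε₁t + ε₂`, `xtld = (ε₃x + ε₄)/(ε₅x + ε₆)`, `utld = ε₇ X_x^{1/(2n+2)} u` (with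
`ε₃ε₆ − ε₄ε₅ = 1`, so `X' = 1/(ε₅x + ε₆)² > 0`) maps positive smooth solutions of
`f u_tt = (uⁿu_x)_x + h uᵐ` to solutions of the equation with transformed arbitrary
elements `ftld, htld`. -/
theorem equivalence_group_n_ne_neg_one
    (n m : ℝ) (hn : n ≠ 0) (hn1 : n ≠ -1)
    (ε₁ ε₂ ε₃ ε₄ ε₅ ε₆ ε₇ : ℝ) (hε₁ : ε₁ ≠ 0) (hε₇ : 0 < ε₇)
    (hdet : ε₃ * ε₆ - ε₄ * ε₅ = 1)
    (I : Set ℝ) (hI : IsOpen I) (hIc : I.OrdConnected)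
    (hden : ∀ x ∈ I, ε₅ * x + ε₆ ≠ 0)
    (X : ℝ → ℝ) (hXdef : ∀ x : ℝ, X x = (ε₃ * x + ε₄) / (ε₅ * x + ε₆))
    (f h : ℝ → ℝ) (hf : ContDiffOn ℝ (⊤ : ℕ∞) f I) (hh : ContDiffOn ℝ (⊤ : ℕ∞) h I)
    (hfpos : ∀ x ∈ I, 0 < f x)
    (u : ℝ → ℝ → ℝ)
    (hu : ContDiffOn ℝ (⊤ : ℕ∞) (fun p : ℝ × ℝ => u p.1 p.2) (univ ×ˢ I))
    (hupos : ∀ t : ℝ, ∀ x ∈ I, 0 < u t x)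
    (hsol : ∀ t : ℝ, ∀ x ∈ I,
      f x * pt2 (pt2 u) t x
        = deriv (fun y => (u t y) ^ n * px2 u t y) x + h x * (u t x) ^ m)
    (utld : ℝ → ℝ → ℝ) (ftld htld : ℝ → ℝ)
    (hutlddef : ∀ t : ℝ, ∀ x ∈ I,
      utld (ε₁ * t + ε₂) (X x)
        = ε₇ * (1 / (ε₅ * x + ε₆) ^ 2) ^ ((1 : ℝ) / (2 * n + 2)) * u t x)
    (hftlddef : ∀ x ∈ I,
      ftld (X x) = ε₁ ^ 2 * ε₇ ^ n
        * (1 / (ε₅ * x + ε₆) ^ 2) ^ (-(3 * n + 4) / (2 * n + 2)) * f x)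
    (hhtlddef : ∀ x ∈ I,
      htld (X x) = ε₇ ^ (n + 1 - m)
        * (1 / (ε₅ * x + ε₆) ^ 2) ^ (-(m + 3 * n + 3) / (2 * n + 2)) * h x) :
    (∀ x ∈ I, HasDerivAt X (1 / (ε₅ * x + ε₆) ^ 2) x ∧ 0 < 1 / (ε₅ * x + ε₆) ^ 2)
    ∧ ∀ ttld : ℝ, ∀ xtld ∈ X '' I,
        ftld xtld * pt2 (pt2 utld) ttld xtld
          = deriv (fun y => (utld ttld y) ^ n * px2 utld ttld y) xtld + htld xtld * (utld ttld xtld) ^ m :=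
  equivalence_group_n_ne_neg_one_general n m hn1 ε₁ ε₂ ε₃ ε₄ ε₅ ε₆ ε₇ hε₁ hε₇ hdet I hI hden X hXdef
    f h u hu hupos hsol utld ftld htld hutlddef hftlddef hhtlddef

end
end

section
/- Let m ∈ ℝ and let ε₁, ε₂, ε₃, ε₄, ε₆ ∈ ℝ and ε₅ > 0 with ε₁ ≠ 0 and ε₃ ≠ 0. Let I ⊆ ℝ be an open interval, f : I → (0,∞) and h : I → ℝ smooth, and let u : ℝ × I → (0,∞) be a smooth solution of f(x)u_tt = ∂_x(u^{−1}u_x) + h(x)uᵐ. Define ũ on the transformed domain by ũ(ε₁t + ε₂, ε₃x + ε₄) = ε₅·e^{ε₆x}·u(t,x), and define f̃(ε₃x + ε₄) = ε₁²ε₃^{−2}ε₅^{−1}e^{−ε₆x}·f(x) and h̃(ε₃x + ε₄) = ε₃^{−2}ε₅^{−m}e^{−mε₆x}·h(x). Then ũ satisfies f̃(x̃)·ũ_t̃t̃ = ∂_x̃(ũ^{−1}ũ_x̃) + h̃(x̃)·ũᵐ on the transformed domain. -/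
open Real Set

noncomputable section

/-! The changes of variables are affine, so every derivative of `ũ` is the corresponding
derivative of `u` times a constant power of `ε₁⁻¹` or `ε₃⁻¹`. For `n = −1` the flux `u⁻¹u_x` is
the logarithmic derivative of `u`: it ignores the factor `ε₅` and is only shifted by the
constant `ε₆` under multiplication by `e^{ε₆x}`, and that shift dies under the next `x`-derivative.
With the transformed `f̃` and `h̃`, each term of the new equation is then `ε₃⁻²` times the
corresponding term of the old one. -/

open Filter Topology

theorem deriv_comp_mul_add (F : ℝ → ℝ) (a b x : ℝ) :
    deriv (fun s => F (a * s + b)) x = a * deriv F (a * x + b) := by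
  simpa only [smul_eq_mul, deriv_comp_add_const] using
    deriv_comp_mul_left a (fun y => F (y + b)) x

section AffineChange

variable {F G : ℝ → ℝ} {a b c d x : ℝ}

theorem deriv_eq_of_eventually_comp_mul_add (ha : a ≠ 0)
    (h : ∀ᶠ s in 𝓝 x, F (a * s + b) = c * G s + d) :
    deriv F (a * x + b) = a⁻¹ * c * deriv G x := by
  have hderiv : deriv (fun s => F (a * s + b)) x = deriv (fun s => c * G s + d) x :=
    EventuallyEq.deriv_eq h
  rw [deriv_comp_mul_add, deriv_add_const, deriv_const_mul_field] at hderiv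
  rw [mul_assoc, ← hderiv, inv_mul_cancel_left₀ ha]

theorem deriv_deriv_eq_of_comp_mul_add (ha : a ≠ 0) (h : ∀ s, F (a * s + b) = c * G s)
    (x : ℝ) : deriv (deriv F) (a * x + b) = a⁻¹ * (a⁻¹ * c) * deriv (deriv G) x := by
  have h' (s : ℝ) : F (a * s + b) = c * G s + 0 := by rw [h, add_zero]
  refine deriv_eq_of_eventually_comp_mul_add (d := 0) ha (.of_forall fun s => ?_)
  rw [deriv_eq_of_eventually_comp_mul_add ha (.of_forall h'), add_zero]

theorem logDeriv_eq_of_eventually_comp_mul_add (ha : a ≠ 0)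
    (h : ∀ᶠ s in 𝓝 x, F (a * s + b) = G s) :
    logDeriv F (a * x + b) = a⁻¹ * logDeriv G x := by
  have h' : ∀ᶠ s in 𝓝 x, F (a * s + b) = 1 * G s + 0 := h.mono fun s hs => by rw [hs]; ring
  rw [logDeriv_apply, logDeriv_apply, deriv_eq_of_eventually_comp_mul_add ha h', h.self_of_nhds]
  ring

end AffineChange

theorem logDeriv_const_mul_exp_mul {w : ℝ → ℝ} {k ε x : ℝ} (hk : k ≠ 0)
    (hw : DifferentiableAt ℝ w x) (hwx : w x ≠ 0) :
    logDeriv (fun s => k * exp (ε * s) * w s) x = ε + logDeriv w x := by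
  rw [logDeriv_mul (f := fun s => k * exp (ε * s)) x (by positivity) hwx (by fun_prop) hw,
    logDeriv_const_mul x k hk, logDeriv_apply, (((hasDerivAt_id' x).const_mul ε).exp).deriv]
  field_simp

theorem rpow_neg_one_mul_px2 (v : ℝ → ℝ → ℝ) (t : ℝ) :
    (fun y => v t y ^ (-1 : ℝ) * px2 v t y) = logDeriv (v t) := by
  funext y
  rw [rpow_neg_one, logDeriv_apply, inv_mul_eq_div]
  rfl

theorem equivalence_group_n_eq_neg_one_general
    (m : ℝ) (ε₁ ε₂ ε₃ ε₄ ε₅ ε₆ : ℝ) (hε₁ : ε₁ ≠ 0) (hε₃ : ε₃ ≠ 0) (hε₅ : 0 < ε₅)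
    (I : Set ℝ) (hI : IsOpen I)
    (f h : ℝ → ℝ)
    (u : ℝ → ℝ → ℝ)
    (hu : ContDiffOn ℝ (⊤ : ℕ∞) (fun p : ℝ × ℝ => u p.1 p.2) (univ ×ˢ I))
    (hupos : ∀ t : ℝ, ∀ x ∈ I, 0 < u t x)
    (hsol : ∀ t : ℝ, ∀ x ∈ I,
      f x * pt2 (pt2 u) t x
        = deriv (fun y => (u t y) ^ (-1 : ℝ) * px2 u t y) x + h x * (u t x) ^ m)
    (utld : ℝ → ℝ → ℝ) (ftld htld : ℝ → ℝ)
    (hutlddef : ∀ t : ℝ, ∀ x ∈ I,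
      utld (ε₁ * t + ε₂) (ε₃ * x + ε₄) = ε₅ * Real.exp (ε₆ * x) * u t x)
    (hftlddef : ∀ x ∈ I,
      ftld (ε₃ * x + ε₄) = ε₁ ^ 2 * (ε₃ ^ 2)⁻¹ * ε₅⁻¹ * Real.exp (-ε₆ * x) * f x)
    (hhtlddef : ∀ x ∈ I,
      htld (ε₃ * x + ε₄) = (ε₃ ^ 2)⁻¹ * ε₅ ^ (-m) * Real.exp (-m * ε₆ * x) * h x) :
    ∀ ttld : ℝ, ∀ xtld ∈ (fun x => ε₃ * x + ε₄) '' I,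
      ftld xtld * pt2 (pt2 utld) ttld xtld
        = deriv (fun y => (utld ttld y) ^ (-1 : ℝ) * px2 utld ttld y) xtld
          + htld xtld * (utld ttld xtld) ^ m := by
  rintro ttld _ ⟨x, hx, rfl⟩
  obtain ⟨t, rfl⟩ : ∃ t, ttld = ε₁ * t + ε₂ := ⟨(ttld - ε₂) / ε₁, by field_simp; ring⟩
  have hslice : ∀ y ∈ I, DifferentiableAt ℝ (u t) y := fun y hy =>
    ((hu.differentiableOn (by simp)).differentiableAt
      ((isOpen_univ.prod hI).mem_nhds ⟨mem_univ t, hy⟩)).comp y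
      ((differentiableAt_const t).prodMk differentiableAt_id)
  have htime := deriv_deriv_eq_of_comp_mul_add (F := fun s => utld s (ε₃ * x + ε₄))
    (G := fun s => u s x) hε₁ (fun s => hutlddef s x hx) t
  have hflux : ∀ y ∈ I, logDeriv (utld (ε₁ * t + ε₂)) (ε₃ * y + ε₄)
      = ε₃⁻¹ * logDeriv (u t) y + ε₃⁻¹ * ε₆ := fun y hy => by
    rw [logDeriv_eq_of_eventually_comp_mul_add hε₃
      ((hI.eventually_mem hy).mono fun s hs => hutlddef t s hs),
      logDeriv_const_mul_exp_mul hε₅.ne' (hslice y hy) (hupos t y hy).ne']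
    ring
  have hspace := deriv_eq_of_eventually_comp_mul_add hε₃ ((hI.eventually_mem hx).mono hflux)
  have hpow : (ε₅ * exp (ε₆ * x) * u t x) ^ m = ε₅ ^ m * exp (m * ε₆ * x) * u t x ^ m := by
    rw [mul_rpow (by positivity) (hupos t x hx).le, mul_rpow hε₅.le (exp_pos _).le, ← exp_mul]
    ring_nf
  have hs := hsol t x hx
  rw [rpow_neg_one_mul_px2] at hs ⊢
  simp only [pt2] at hs ⊢
  rw [htime, hspace, hftlddef x hx, hhtlddef x hx, hutlddef t x hx, hpow, rpow_neg hε₅.le]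
  simp only [neg_mul, exp_neg]
  field_simp
  linear_combination hs

/-- equivalence group, case `n = −1`. The point transformation
`t̃ = ε₁t + ε₂`, `x̃ = ε₃x + ε₄`, `ũ = ε₅e^{ε₆x}u` maps positive smooth solutions of
`f u_tt = (u⁻¹u_x)_x + h uᵐ` to solutions of the equation with transformed arbitrary
elements `f̃ = ε₁²ε₃⁻²ε₅⁻¹e^{−ε₆x}f`, `h̃ = ε₃⁻²ε₅⁻ᵐe^{−mε₆x}h`. -/
theorem equivalence_group_n_eq_neg_one
    (m : ℝ) (ε₁ ε₂ ε₃ ε₄ ε₅ ε₆ : ℝ) (hε₁ : ε₁ ≠ 0) (hε₃ : ε₃ ≠ 0) (hε₅ : 0 < ε₅)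
    (I : Set ℝ) (hI : IsOpen I) (hIc : I.OrdConnected)
    (f h : ℝ → ℝ) (hf : ContDiffOn ℝ (⊤ : ℕ∞) f I) (hh : ContDiffOn ℝ (⊤ : ℕ∞) h I)
    (hfpos : ∀ x ∈ I, 0 < f x)
    (u : ℝ → ℝ → ℝ)
    (hu : ContDiffOn ℝ (⊤ : ℕ∞) (fun p : ℝ × ℝ => u p.1 p.2) (univ ×ˢ I))
    (hupos : ∀ t : ℝ, ∀ x ∈ I, 0 < u t x)
    (hsol : ∀ t : ℝ, ∀ x ∈ I,
      f x * pt2 (pt2 u) t x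
        = deriv (fun y => (u t y) ^ (-1 : ℝ) * px2 u t y) x + h x * (u t x) ^ m)
    (utld : ℝ → ℝ → ℝ) (ftld htld : ℝ → ℝ)
    (hutlddef : ∀ t : ℝ, ∀ x ∈ I,
      utld (ε₁ * t + ε₂) (ε₃ * x + ε₄) = ε₅ * Real.exp (ε₆ * x) * u t x)
    (hftlddef : ∀ x ∈ I,
      ftld (ε₃ * x + ε₄) = ε₁ ^ 2 * (ε₃ ^ 2)⁻¹ * ε₅⁻¹ * Real.exp (-ε₆ * x) * f x)
    (hhtlddef : ∀ x ∈ I,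
      htld (ε₃ * x + ε₄) = (ε₃ ^ 2)⁻¹ * ε₅ ^ (-m) * Real.exp (-m * ε₆ * x) * h x) :
    ∀ ttld : ℝ, ∀ xtld ∈ (fun x => ε₃ * x + ε₄) '' I,
      ftld xtld * pt2 (pt2 utld) ttld xtld
        = deriv (fun y => (utld ttld y) ^ (-1 : ℝ) * px2 utld ttld y) xtld
          + htld xtld * (utld ttld xtld) ^ m :=
  equivalence_group_n_eq_neg_one_general m ε₁ ε₂ ε₃ ε₄ ε₅ ε₆ hε₁ hε₃ hε₅ I hI f h u hu hupos hsol
    utld ftld htld hutlddef hftlddef hhtlddef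

end
end
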